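/- Let (W,S) be a Coxeter system, I ⊆ S, x ∈ W^I a minimal coset representative and y ∈ W_I with fixed reduced expressions x̲ of x and y̲ of y. Then prepending l(x) ones gives a bijection between subexpressions (01-sequences) of y̲ expressing an element z ∈ W_I and subexpressions of the concatenation x̲y̲ expressing xz, and this bijection preserves the defect. -/

import Mathlib

/-!
Everything rests on two properties of a minimal coset representative `x ∈ W^I`:
`ℓ(xu) = ℓ(x) + ℓ(u)` for `u ∈ W_I`, and the letters of a reduced word of an element of `W_I` are
simple reflections of `W_I`. Both follow from the strong exchange property, which comes from Tits'
parity representation of `W` on `W × ZMod 2`: the parity of the number of occurrences of a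
reflection `t` in the right inversion sequence of a word depends only on the product of the word,
and it is odd exactly when `t` is a right inversion of that product.

In a subexpression of `x̲y̲` expressing `xz`, the chosen letters of `x̲` multiply to an element of
`x W_I`, which has length at least `ℓ(x)`, so every letter of `x̲` is chosen. The defects agree
because left multiplication by `x` adds `ℓ(x)` to the length of every element of `W_I`, so it does
not change the decorations `U`/`D` along `y̲`.
-/

variable {B W : Type*} [Group W] {M : CoxeterMatrix B}

/-- The element of `W` expressed by a subexpression: the product of the chosen letters. -/
def subProd (cs : CoxeterSystem M W) (l : List (B × Bool)) : W :=
  cs.wordProd (l.filterMap fun p => if p.2 then some p.1 else none)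

/-- Auxiliary defect computation: `w` is the product of the chosen letters so far;
a position decorated `U0` contributes `+1`, a position decorated `D0` contributes `-1`. -/
noncomputable def defectAux (cs : CoxeterSystem M W) : W → List (B × Bool) → ℤ
  | _, [] => 0
  | w, p :: rest =>
    (if p.2 then 0
     else if cs.length w < cs.length (w * cs.simple p.1) then 1 else -1)
      + defectAux cs (if p.2 then w * cs.simple p.1 else w) rest

/-- The defect of a 01-sequence `e` on the word `ω`. -/
noncomputable def defect (cs : CoxeterSystem M W) (ω : List B) (e : List Bool) : ℤ :=
  defectAux cs 1 (ω.zip e)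

theorem List.even_count_of_getElem_eq_getElem_add {α : Type*} [BEq α] (L : List α) (m : ℕ)
    (hlen : L.length = 2 * m) (hper : ∀ k (hk : k < m), L[k] = L[k + m]) (a : α) :
    Even (L.count a) := by
  have hdrop : L.drop m = L.take m :=
    List.ext_getElem (by simp only [List.length_drop, List.length_take]; omega) fun k h₁ h₂ => by
      simp only [List.getElem_drop, List.getElem_take]
      rw [hper k (by simp only [List.length_take, lt_inf_iff] at h₂; omega)]
      congr 1
      omega
  rw [← List.take_append_drop m L, List.count_append, hdrop]
  exact ⟨_, rfl⟩

theorem List.count_map_conj {G : Type*} [Group G] [DecidableEq G] (g t : G) (l : List G) :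
    (l.map (MulAut.conj g)).count t = l.count (g⁻¹ * t * g) := by
  conv_lhs => rw [show t = MulAut.conj g (g⁻¹ * t * g) by simp [mul_assoc]]
  exact List.count_map_of_injective _ _ (MulAut.conj g).injective _

namespace CoxeterSystem

open List
open scoped Classical

variable (cs : CoxeterSystem M W)

local prefix:100 "s" => cs.simple
local prefix:100 "π" => cs.wordProd
local prefix:100 "ℓ" => cs.length
local prefix:100 "ris " => cs.rightInvSeq
local prefix:100 "lis " => cs.leftInvSeq

theorem prod_map_alternatingWord_two_mul {G : Type*} [Monoid G] (f : B → G) (i i' : B)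
    (m : ℕ) :
    ((alternatingWord i i' (2 * m)).map f).prod = (f i * f i') ^ m := by
  induction m with
  | zero => simp [alternatingWord]
  | succ m ih =>
    have hodd : ¬ Even (2 * m + 1) := by simp [parity_simps]
    rw [show 2 * (m + 1) = 2 * m + 1 + 1 by ring, alternatingWord_succ', alternatingWord_succ',
      if_neg hodd, if_pos (by simp [parity_simps]), map_cons, map_cons, prod_cons, prod_cons, ih,
      pow_succ', mul_assoc]

theorem leftInvSeq_eq_map_rightInvSeq (ω : List B) :
    lis ω = (ris ω).map (MulAut.conj (π ω)) := by
  induction ω with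
  | nil => simp
  | cons a ω ih =>
    simp [leftInvSeq, rightInvSeq, ih, wordProd_cons, mul_assoc]

theorem even_count_leftInvSeq_alternatingWord (i i' : B) (t : W) :
    Even ((lis (alternatingWord i i' (2 * M i i'))).count t) := by
  refine List.even_count_of_getElem_eq_getElem_add _ (M i i') (by simp) (fun k hk => ?_) t
  rw [getElem_leftInvSeq_alternatingWord _ _ _ _ _ (by omega),
    getElem_leftInvSeq_alternatingWord _ _ _ _ _ (by omega), prod_alternatingWord_eq_mul_pow,
    prod_alternatingWord_eq_mul_pow, show (2 * (k + M i i') + 1) / 2 = k + M i i' by omega,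
    show (2 * k + 1) / 2 = k by omega, pow_add, simple_mul_simple_pow', mul_one]
  simp [parity_simps]

noncomputable def parityAction (i : B) : Function.End (W × ZMod 2) :=
  fun p => (s i * p.1 * s i, p.2 + if p.1 = s i then 1 else 0)

theorem prod_map_parityAction_apply (ω : List B) (t : W) (ε : ZMod 2) :
    (ω.map cs.parityAction).prod (t, ε) =
      (π ω * t * (π ω)⁻¹, ε + ((ris ω).count t : ZMod 2)) := by
  induction ω with
  | nil => simp [Function.End.one_def]
  | cons a ω ih =>
    rw [map_cons, prod_cons]
    change cs.parityAction a ((ω.map cs.parityAction).prod (t, ε)) = _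
    rw [ih]
    have hcond : π ω * t * (π ω)⁻¹ = s a ↔ (π ω)⁻¹ * s a * π ω = t := by
      constructor <;> intro h <;> rw [← h] <;> group
    simp only [parityAction, rightInvSeq, wordProd_cons, count_cons, mul_inv_rev, inv_simple,
      hcond, beq_iff_eq, Prod.mk.injEq]
    refine ⟨by group, ?_⟩
    split_ifs <;> push_cast <;> ring

theorem parityAction_isLiftable : M.IsLiftable cs.parityAction := by
  intro i i'
  rw [← prod_map_alternatingWord_two_mul]
  funext ⟨t, ε⟩
  have hone : π (alternatingWord i i' (2 * M i i')) = 1 := by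
    rw [prod_alternatingWord_eq_mul_pow, if_pos (by simp), Nat.mul_div_cancel_left _ two_pos,
      one_mul, simple_mul_simple_pow]
  have hlis := cs.leftInvSeq_eq_map_rightInvSeq (alternatingWord i i' (2 * M i i'))
  simp only [hone, map_one, MulAut.coe_one, map_id] at hlis
  obtain ⟨c, hc⟩ := cs.even_count_leftInvSeq_alternatingWord i i' t
  rw [prod_map_parityAction_apply, hone, ← hlis, hc]
  simp only [one_mul, inv_one, mul_one, Nat.cast_add, CharTwo.add_self_eq_zero, add_zero]
  rfl

noncomputable def parityRep : W →* Function.End (W × ZMod 2) :=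
  cs.lift ⟨cs.parityAction, cs.parityAction_isLiftable⟩

theorem parityRep_wordProd (ω : List B) :
    cs.parityRep (π ω) = (ω.map cs.parityAction).prod := by
  rw [wordProd, map_list_prod, map_map]
  exact congrArg prod <|
    map_congr_left fun i _ => cs.lift_apply_simple cs.parityAction_isLiftable i

theorem count_rightInvSeq_eq_of_wordProd_eq {ω ω' : List B} (h : π ω = π ω') (t : W) :
    ((ris ω).count t : ZMod 2) = (ris ω').count t := by
  have := congrArg (fun f : Function.End (W × ZMod 2) => (f (t, 0)).2)
    ((cs.parityRep_wordProd ω).symm.trans (h ▸ cs.parityRep_wordProd ω'))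
  simpa [prod_map_parityAction_apply] using this

theorem rightInvSeq_append (α β : List B) :
    ris (α ++ β) = (ris α).map (MulAut.conj (π β)⁻¹) ++ ris β := by
  induction α with
  | nil => simp
  | cons a α ih =>
    simp only [cons_append, rightInvSeq, ih, map_cons, wordProd_append, mul_inv_rev,
      MulAut.conj_apply, inv_inv]
    group

theorem count_rightInvSeq_of_wordProd_eq_self {t : W} (ht : cs.IsReflection t) {ω : List B}
    (hω : π ω = t) : ((ris ω).count t : ZMod 2) = 1 := by
  obtain ⟨v, i, rfl⟩ := ht
  obtain ⟨α, rfl⟩ := cs.wordProd_surjective v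
  have hpal : π (α ++ i :: α.reverse) = π α * s i * (π α)⁻¹ := by
    simp [wordProd_append, wordProd_cons, mul_assoc]
  rw [cs.count_rightInvSeq_eq_of_wordProd_eq (hω.trans hpal.symm), rightInvSeq_append,
    rightInvSeq, rightInvSeq_reverse, leftInvSeq_eq_map_rightInvSeq, count_append, count_cons,
    count_reverse, count_map_conj, count_map_conj]
  -- in the palindrome `α i α⁻¹` the middle entry is `t`, and the entries on either side of it
  -- are conjugates of `ris α` in which `t` occurs as often as `s i` occurs in `ris α`
  have hfirst :
      (π (i :: α.reverse))⁻¹⁻¹ * (π α * s i * (π α)⁻¹) * (π (i :: α.reverse))⁻¹ = s i := by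
    simp only [wordProd_cons, wordProd_reverse, inv_inv, mul_inv_rev, inv_simple]
    group
    simp [simple_mul_simple_self]
  have hlast : (π α)⁻¹ * (π α * s i * (π α)⁻¹) * π α = s i := by group
  have hmid : (π α.reverse)⁻¹ * s i * π α.reverse = π α * s i * (π α)⁻¹ := by simp
  rw [hfirst, hlast, hmid, beq_self_eq_true, if_pos rfl]
  push_cast
  rw [← add_assoc, CharTwo.add_self_eq_zero, zero_add]

theorem count_rightInvSeq_of_length_mul_lt {w t : W} (ht : cs.IsReflection t)
    (hlt : ℓ (w * t) < ℓ w) {ω : List B} (hω : π ω = w) : ((ris ω).count t : ZMod 2) = 1 := by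
  obtain ⟨γ, hγ, hγw⟩ := cs.exists_isReduced (w * t)
  obtain ⟨ρ, hρ⟩ := cs.wordProd_surjective t
  have hprod : π ω = π (γ ++ ρ) := by
    rw [wordProd_append, ← hγw, hρ, mul_assoc, ht.mul_self, mul_one, hω]
  have hnotmem : t ∉ ris γ := fun hmem => by
    have := (cs.isRightInversion_of_mem_rightInvSeq hγ hmem).2
    rw [← hγw, mul_assoc, ht.mul_self, mul_one] at this
    omega
  rw [cs.count_rightInvSeq_eq_of_wordProd_eq hprod, rightInvSeq_append, count_append,
    count_map_conj, hρ, inv_inv, mul_inv_cancel_right, count_eq_zero_of_not_mem hnotmem,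
    Nat.cast_add, cs.count_rightInvSeq_of_wordProd_eq_self ht hρ, Nat.cast_zero, zero_add]

theorem exists_wordProd_eraseIdx_eq_mul {ω : List B} {t : W} (ht : cs.IsReflection t)
    (hlt : ℓ (π ω * t) < ℓ (π ω)) : ∃ j < ω.length, π (ω.eraseIdx j) = π ω * t := by
  have hmem : t ∈ ris ω := by
    by_contra h
    simpa [count_eq_zero_of_not_mem h] using cs.count_rightInvSeq_of_length_mul_lt ht hlt rfl
  obtain ⟨j, hj, rfl⟩ := mem_iff_getElem.mp hmem
  refine ⟨j, by simpa using hj, ?_⟩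
  rw [← wordProd_mul_getD_rightInvSeq, getD_eq_getElem]

theorem wordProd_mem_of_forall_simple_mem (H : Subgroup W) {ω : List B}
    (h : ∀ b ∈ ω, s b ∈ H) : π ω ∈ H :=
  list_prod_mem (by simpa using h)

variable {I : Set B}

theorem exists_word_of_mem_closure {u : W} (hu : u ∈ Subgroup.closure (cs.simple '' I)) :
    ∃ ω : List B, (∀ b ∈ ω, b ∈ I) ∧ π ω = u := by
  induction hu using Subgroup.closure_induction with
  | mem _ hx =>
    obtain ⟨b, hb, rfl⟩ := hx
    exact ⟨[b], by simpa using hb, by simp⟩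
  | one => exact ⟨[], by simp, by simp⟩
  | mul _ _ _ _ hx hy =>
    obtain ⟨ω₁, h₁, rfl⟩ := hx
    obtain ⟨ω₂, h₂, rfl⟩ := hy
    exact ⟨ω₁ ++ ω₂, by simpa [or_imp, forall_and] using ⟨h₁, h₂⟩, wordProd_append _ _ _⟩
  | inv _ _ hx =>
    obtain ⟨ω, h, rfl⟩ := hx
    exact ⟨ω.reverse, by simpa using h, wordProd_reverse _ _⟩

theorem simple_mem_closure_of_length_mul_lt {y : W}
    (hy : y ∈ Subgroup.closure (cs.simple '' I)) {i : B} (hi : ℓ (y * s i) < ℓ y) :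
    s i ∈ Subgroup.closure (cs.simple '' I) := by
  obtain ⟨ρ, hρI, rfl⟩ := cs.exists_word_of_mem_closure hy
  obtain ⟨j, -, hj⟩ := cs.exists_wordProd_eraseIdx_eq_mul (cs.isReflection_simple i) hi
  have hmul : π ρ * s i ∈ Subgroup.closure (cs.simple '' I) :=
    hj ▸ cs.wordProd_mem_of_forall_simple_mem _ fun b hb =>
      Subgroup.subset_closure ⟨b, hρI b ((eraseIdx_sublist ρ j).mem hb), rfl⟩
  simpa using mul_mem (inv_mem hy) hmul

theorem simple_mem_closure_of_isReduced {ω : List B} (hω : cs.IsReduced ω)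
    (hmem : π ω ∈ Subgroup.closure (cs.simple '' I)) :
    ∀ b ∈ ω, s b ∈ Subgroup.closure (cs.simple '' I) := by
  induction ω using reverseRecOn with
  | nil => simp
  | append_singleton ω b ih =>
    have hprod : π ω = π (ω ++ [b]) * s b := by simp [wordProd_append, mul_assoc]
    have hb : s b ∈ Subgroup.closure (cs.simple '' I) := by
      refine cs.simple_mem_closure_of_length_mul_lt hmem ?_
      rw [← hprod, hω.eq, length_append, length_singleton]
      exact (cs.length_wordProd_le ω).trans_lt (by omega)
    have hω₀ : cs.IsReduced ω := by simpa using hω.take ω.length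
    intro c hc
    rcases mem_append.mp hc with hc | hc
    · exact ih hω₀ (hprod ▸ mul_mem hmem hb) c hc
    · rwa [mem_singleton.mp hc]

def IsMinCosetRep (I : Set B) (x : W) : Prop :=
  ∀ d ∈ Subgroup.closure (cs.simple '' I), ℓ x ≤ ℓ (x * d)

theorem isReduced_append_of_isMinCosetRep {ξ ω : List B} (hx : cs.IsMinCosetRep I (π ξ))
    (hξ : cs.IsReduced ξ) (hω : cs.IsReduced ω)
    (hωI : ∀ b ∈ ω, s b ∈ Subgroup.closure (cs.simple '' I)) : cs.IsReduced (ξ ++ ω) := by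
  induction ω using reverseRecOn with
  | nil => simpa using hξ
  | append_singleton ω b ih =>
    have hω₀ : cs.IsReduced ω := by simpa using hω.take ω.length
    have hlen := ih hω₀ fun c hc => hωI c (by simp [hc])
    rcases cs.length_mul_simple (π (ξ ++ ω)) b with hup | hdown
    · rw [IsReduced, ← append_assoc, wordProd_append, wordProd_singleton, hup, hlen.eq]
      simp [add_assoc]
    exfalso
    have hlt : ℓ (π (ξ ++ ω) * s b) < ℓ (π (ξ ++ ω)) := by omega
    obtain ⟨j, hj, hjprod⟩ := cs.exists_wordProd_eraseIdx_eq_mul (cs.isReflection_simple b) hlt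
    rcases lt_or_ge j ξ.length with hjξ | hjξ
    · -- erasing a letter of `ξ` writes `π ξ * d` with `d ∈ W_I` as a shorter word
      rw [eraseIdx_append_of_lt_length hjξ, wordProd_append, wordProd_append, mul_assoc] at hjprod
      have hω₀I : π ω ∈ Subgroup.closure (cs.simple '' I) :=
        cs.wordProd_mem_of_forall_simple_mem _ fun c hc => hωI c (by simp [hc])
      have hd : π ω * s b * (π ω)⁻¹ ∈ Subgroup.closure (cs.simple '' I) :=
        mul_mem (mul_mem hω₀I (hωI b (by simp))) (inv_mem hω₀I)
      have hshort : π (ξ.eraseIdx j) = π ξ * (π ω * s b * (π ω)⁻¹) := by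
        rw [eq_mul_inv_iff_mul_eq.mpr hjprod]; group
      have := cs.length_wordProd_le (ξ.eraseIdx j)
      rw [hshort, length_eraseIdx_of_lt hjξ] at this
      have := hx _ hd
      rw [hξ.eq] at this
      omega
    · -- erasing a letter of `ω` writes `π ω * s b` as a word shorter than `ω`
      rw [eraseIdx_append_of_length_le hjξ, wordProd_append, wordProd_append, mul_assoc,
        mul_right_inj] at hjprod
      have := cs.length_wordProd_le (ω.eraseIdx (j - ξ.length))
      rw [hjprod, ← wordProd_singleton cs b, ← wordProd_append, hω.eq,
        length_eraseIdx_of_lt (by rw [length_append] at hj; omega)] at this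
      simp only [length_append, length_singleton] at this
      omega

theorem length_mul_of_isMinCosetRep {x u : W} (hx : cs.IsMinCosetRep I x)
    (hu : u ∈ Subgroup.closure (cs.simple '' I)) : ℓ (x * u) = ℓ x + ℓ u := by
  obtain ⟨ξ, hξ, rfl⟩ := cs.exists_isReduced x
  obtain ⟨ω, hω, rfl⟩ := cs.exists_isReduced u
  have := cs.isReduced_append_of_isMinCosetRep hx hξ hω
    (cs.simple_mem_closure_of_isReduced hω hu)
  rw [IsReduced, wordProd_append, length_append] at this
  rw [this, hξ.eq, hω.eq]

theorem length_mul_lt_mul_simple_iff_of_isMinCosetRep {x u : W} (hx : cs.IsMinCosetRep I x)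
    (hu : u ∈ Subgroup.closure (cs.simple '' I)) {i : B}
    (hi : s i ∈ Subgroup.closure (cs.simple '' I)) :
    ℓ (x * u) < ℓ (x * u * s i) ↔ ℓ u < ℓ (u * s i) := by
  rw [mul_assoc, cs.length_mul_of_isMinCosetRep hx hu,
    cs.length_mul_of_isMinCosetRep hx (mul_mem hu hi)]
  omega

theorem subProd_append (l₁ l₂ : List (B × Bool)) :
    subProd cs (l₁ ++ l₂) = subProd cs l₁ * subProd cs l₂ := by
  simp only [subProd, filterMap_append, wordProd_append]

theorem subProd_zip_replicate_true (ω : List B) :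
    subProd cs (ω.zip (replicate ω.length true)) = π ω := by
  induction ω with
  | nil => rfl
  | cons a ω ih => simpa [subProd, replicate_succ, wordProd_cons] using ih

theorem subProd_zip_mem (H : Subgroup W) {ω : List B} (h : ∀ b ∈ ω, s b ∈ H)
    (e : List Bool) : subProd cs (ω.zip e) ∈ H :=
  cs.wordProd_mem_of_forall_simple_mem H fun b hb => by
    obtain ⟨p, hp, hpb⟩ := mem_filterMap.mp hb
    obtain rfl : p.1 = b := by split_ifs at hpb; simpa using hpb
    exact h _ (of_mem_zip hp).1

theorem length_subProd_zip_le (ω : List B) (e : List Bool) :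
    ℓ (subProd cs (ω.zip e)) ≤ ω.length :=
  (cs.length_wordProd_le _).trans <| (length_filterMap_le _ _).trans <| by simp

theorem eq_replicate_true_of_length_le_subProd {ω : List B} {e : List Bool}
    (he : e.length = ω.length) (h : ω.length ≤ ℓ (subProd cs (ω.zip e))) :
    e = replicate ω.length true := by
  induction ω generalizing e with
  | nil => simpa using he
  | cons a ω ih =>
    obtain _ | ⟨b, e⟩ := e
    · simp at he
    have hlen : e.length = ω.length := by simpa using he
    have hrest := cs.length_subProd_zip_le ω e
    cases b
    · change ω.length + 1 ≤ ℓ (subProd cs (ω.zip e)) at h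
      omega
    · change ω.length + 1 ≤ ℓ (s a * subProd cs (ω.zip e)) at h
      have := cs.length_mul_le (s a) (subProd cs (ω.zip e))
      rw [length_simple] at this
      rw [length_cons, replicate_succ, ih hlen (by omega)]

theorem defectAux_zip_replicate_true_append (w : W) (ω : List B) (l : List (B × Bool)) :
    defectAux cs w (ω.zip (replicate ω.length true) ++ l) = defectAux cs (w * π ω) l := by
  induction ω generalizing w with
  | nil => simp
  | cons a ω ih => simp [replicate_succ, defectAux, ih, wordProd_cons, mul_assoc]

theorem defectAux_mul_left (H : Subgroup W) (g : W)
    (hg : ∀ u ∈ H, ∀ i, s i ∈ H → (ℓ (g * u) < ℓ (g * u * s i) ↔ ℓ u < ℓ (u * s i)))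
    {l : List (B × Bool)} (hl : ∀ p ∈ l, s p.1 ∈ H) {u : W} (hu : u ∈ H) :
    defectAux cs (g * u) l = defectAux cs u l := by
  induction l generalizing u with
  | nil => rfl
  | cons p l ih =>
    have hl' : ∀ q ∈ l, s q.1 ∈ H := fun q hq => hl q (mem_cons_of_mem _ hq)
    obtain ⟨i, _ | _⟩ := p
    · simp only [defectAux, Bool.false_eq_true, if_false, ih hl' hu,
        hg u hu i (hl _ mem_cons_self)]
    · simp only [defectAux, if_true, zero_add, mul_assoc,
        ih hl' (mul_mem hu (hl _ mem_cons_self))]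

theorem bijOn_replicate_true_append {ξ ω : List B} (hx : cs.IsMinCosetRep I (π ξ))
    (hξ : cs.IsReduced ξ) (hωI : ∀ b ∈ ω, s b ∈ Subgroup.closure (cs.simple '' I)) {z : W}
    (hz : z ∈ Subgroup.closure (cs.simple '' I)) :
    Set.BijOn (fun e : List Bool => replicate ξ.length true ++ e)
      {e | e.length = ω.length ∧ subProd cs (ω.zip e) = z}
      {e' | e'.length = (ξ ++ ω).length ∧ subProd cs ((ξ ++ ω).zip e') = π ξ * z} := by
  have hzip : ∀ e : List Bool, (ξ ++ ω).zip (replicate ξ.length true ++ e) =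
      ξ.zip (replicate ξ.length true) ++ ω.zip e := fun e => zip_append (by simp)
  refine ⟨?_, fun e₁ _ e₂ _ h => append_cancel_left h, ?_⟩
  · rintro e ⟨hlen, rfl⟩
    exact ⟨by simp [hlen], by rw [hzip, subProd_append, subProd_zip_replicate_true]⟩
  rintro e' ⟨hlen, hprod⟩
  rw [length_append] at hlen
  have he₁ : (e'.take ξ.length).length = ξ.length := by rw [length_take]; omega
  rw [← take_append_drop ξ.length e', zip_append he₁.symm, subProd_append] at hprod
  have hv := cs.subProd_zip_mem _ hωI (e'.drop ξ.length)
  -- the first block expresses an element of `π ξ * W_I`, so it has at least `ℓ (π ξ)` ones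
  have hrep : e'.take ξ.length = replicate ξ.length true := by
    refine cs.eq_replicate_true_of_length_le_subProd he₁ ?_
    rw [eq_mul_inv_of_mul_eq hprod, mul_assoc]
    exact hξ.eq.symm.trans_le (hx _ (mul_mem hz (inv_mem hv)))
  rw [hrep, subProd_zip_replicate_true, mul_right_inj] at hprod
  exact ⟨e'.drop ξ.length, ⟨by rw [length_drop]; omega, hprod⟩, by simp [← hrep]⟩

theorem defect_replicate_true_append {ξ ω : List B} (hx : cs.IsMinCosetRep I (π ξ))
    (hωI : ∀ b ∈ ω, s b ∈ Subgroup.closure (cs.simple '' I)) (e : List Bool) :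
    defect cs (ξ ++ ω) (replicate ξ.length true ++ e) = defect cs ω e := by
  rw [defect, defect, zip_append (by simp), defectAux_zip_replicate_true_append, one_mul,
    ← mul_one (π ξ)]
  exact cs.defectAux_mul_left _ _ (fun u hu i hi =>
    cs.length_mul_lt_mul_simple_iff_of_isMinCosetRep hx hu hi)
    (fun p hp => hωI p.1 (of_mem_zip hp).1) (one_mem _)

end CoxeterSystem

/-- Prepending `ℓ(x)` ones gives a defect-preserving bijection between the
subexpressions of `y̲` expressing `z ∈ W_I` and the subexpressions of `x̲y̲` expressing
`x z`, for `x ∈ W^I` with reduced word `x̲` and `y ∈ W_I` with reduced word `y̲`. -/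
theorem stmt_5 (cs : CoxeterSystem M W) (I : Set B) (x y z : W)
    (hx : ∀ d ∈ Subgroup.closure (cs.simple '' I), cs.length x ≤ cs.length (x * d))
    (hy : y ∈ Subgroup.closure (cs.simple '' I))
    (hz : z ∈ Subgroup.closure (cs.simple '' I))
    (xw yw : List B)
    (hxw : cs.wordProd xw = x) (hxwred : cs.IsReduced xw)
    (hyw : cs.wordProd yw = y) (hywred : cs.IsReduced yw) :
    Set.BijOn (fun e : List Bool => List.replicate xw.length true ++ e)
      {e | e.length = yw.length ∧ subProd cs (yw.zip e) = z}
      {e' | e'.length = (xw ++ yw).length ∧ subProd cs ((xw ++ yw).zip e') = x * z} ∧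
    ∀ e : List Bool, e.length = yw.length → subProd cs (yw.zip e) = z →
      defect cs (xw ++ yw) (List.replicate xw.length true ++ e) = defect cs yw e := by
  subst hxw hyw
  have hyI := cs.simple_mem_closure_of_isReduced hywred hy
  exact ⟨cs.bijOn_replicate_true_append hx hxwred hyI hz,
    fun e _ _ => cs.defect_replicate_true_append hx hyI e⟩
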